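/- For W a symmetric n×n matrix and t_W(K_n) = inf{⟨W,X⟩ : X ⪰ 0, X_{ii} − 2X_{ij} + X_{jj} = 1 for all i≠j}: if 𝟙ᵀW𝟙 > 0 then 2·t_W(K_n) = tr(W) − ‖W𝟙‖²/(𝟙ᵀW𝟙); if W𝟙 = 0 then 2·t_W(K_n) = tr(W); otherwise t_W(K_n) = −∞. -/

import Mathlib

open Matrix

/-!
A matrix `X` satisfies `X i i - 2 X i j + X j j = 1` for all `i ≠ j` exactly when
`X = (y 𝟙ᵀ + 𝟙 yᵀ + 2 I) / 4` with `y = 2 diag X - 𝟙`, and then `⟨W, X⟩ = (⟨w, y⟩ + tr W) / 2`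
for `w = W 𝟙`. Such an `X` is positive semidefinite iff `(y ⬝ x) (𝟙 ⬝ x) + x ⬝ x ≥ 0` for all `x`.
Testing `x = w` gives `⟨w, y⟩ ≥ -‖w‖² / ⟨𝟙, w⟩` when `⟨𝟙, w⟩ > 0`. Conversely `y = t 𝟙 - s w` is
feasible whenever `s² ‖w‖² ≤ 4 t`; taking `s = 2 / ⟨𝟙, w⟩` attains the bound, and when
`⟨𝟙, w⟩ ≤ 0 < ‖w‖` letting `s → ∞` with `t = s² ‖w‖² / 4` drives `⟨w, y⟩ = t ⟨𝟙, w⟩ - s ‖w‖²` to `-∞`.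
-/

/-- The feasible values `⟨W,X⟩` over Gram matrices of unit-distance representations
of `Kₙ`. -/
def tWSet (n : ℕ) (W : Matrix (Fin n) (Fin n) ℝ) : Set ℝ :=
  {r : ℝ | ∃ X : Matrix (Fin n) (Fin n) ℝ, X.PosSemidef ∧
    (∀ i j, i ≠ j → X i i - 2 * X i j + X j j = 1) ∧ r = (W * X).trace}

section UnitDistGram

variable {ι : Type*} [DecidableEq ι]

noncomputable def unitDistGram (y : ι → ℝ) : Matrix ι ι ℝ :=
  (4 : ℝ)⁻¹ • (vecMulVec y 1 + vecMulVec 1 y + (2 : ℝ) • 1)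

lemma unitDistGram_apply (y : ι → ℝ) (i j : ι) :
    unitDistGram y i j = (y i + y j + 2 * (1 : Matrix ι ι ℝ) i j) / 4 := by
  simp only [unitDistGram, Matrix.smul_apply, Matrix.add_apply, vecMulVec_apply, Pi.one_apply,
    smul_eq_mul]
  ring

lemma unitDistGram_isHermitian (y : ι → ℝ) : (unitDistGram y).IsHermitian := by
  ext i j
  simp only [conjTranspose_apply, star_trivial, unitDistGram_apply, one_apply, eq_comm (a := j)]
  ring

lemma unitDistGram_dist_eq_one (y : ι → ℝ) {i j : ι} (hij : i ≠ j) :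
    unitDistGram y i i - 2 * unitDistGram y i j + unitDistGram y j j = 1 := by
  simp only [unitDistGram_apply, one_apply_eq, one_apply_ne hij]
  ring

lemma eq_unitDistGram_of_dist_eq_one (X : Matrix ι ι ℝ)
    (hX : ∀ i j, i ≠ j → X i i - 2 * X i j + X j j = 1) :
    X = unitDistGram fun k => 2 * X k k - 1 := by
  ext i j
  rw [unitDistGram_apply]
  rcases eq_or_ne i j with rfl | hij
  · rw [one_apply_eq]; ring
  · rw [one_apply_ne hij]; linarith [hX i j hij]

variable [Fintype ι]

lemma dotProduct_unitDistGram_mulVec (y x : ι → ℝ) :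
    x ⬝ᵥ (unitDistGram y *ᵥ x) = ((y ⬝ᵥ x) * (1 ⬝ᵥ x) + x ⬝ᵥ x) / 2 := by
  rw [unitDistGram, smul_mulVec, add_mulVec, add_mulVec, vecMulVec_mulVec, vecMulVec_mulVec,
    smul_mulVec, one_mulVec]
  simp only [op_smul_eq_smul, dotProduct_smul, dotProduct_add, smul_eq_mul, dotProduct_comm x y,
    dotProduct_comm x 1]
  ring

lemma posSemidef_unitDistGram_iff (y : ι → ℝ) :
    (unitDistGram y).PosSemidef ↔ ∀ x, 0 ≤ (y ⬝ᵥ x) * (1 ⬝ᵥ x) + x ⬝ᵥ x := by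
  simp only [posSemidef_iff_dotProduct_mulVec, star_trivial, dotProduct_unitDistGram_mulVec,
    unitDistGram_isHermitian, true_and]
  exact forall_congr' fun x => by constructor <;> intro h <;> linarith

lemma posSemidef_unitDistGram_smul_one_sub_smul {w : ι → ℝ} {s t : ℝ}
    (h : s ^ 2 * (w ⬝ᵥ w) ≤ 4 * t) : (unitDistGram (t • 1 - s • w)).PosSemidef := by
  refine (posSemidef_unitDistGram_iff _).2 fun x => ?_
  -- `s a (w ⬝ᵥ x) ≤ (s a / 2)² (w ⬝ᵥ w) + x ⬝ᵥ x` with `a = 1 ⬝ᵥ x`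
  have hsq := dotProduct_self_star_nonneg ((s * (1 ⬝ᵥ x) / 2) • w - x)
  simp only [star_trivial, sub_dotProduct, dotProduct_sub, smul_dotProduct, dotProduct_smul,
    smul_eq_mul, dotProduct_comm x w] at hsq ⊢
  nlinarith [mul_le_mul_of_nonneg_right h (sq_nonneg (1 ⬝ᵥ x))]

lemma trace_mul_unitDistGram {W : Matrix ι ι ℝ} (hW : W.IsSymm) (y : ι → ℝ) :
    (W * unitDistGram y).trace = ((W *ᵥ 1) ⬝ᵥ y + W.trace) / 2 := by
  rw [unitDistGram, Matrix.mul_smul, mul_add, mul_add, mul_vecMulVec, mul_vecMulVec,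
    Matrix.mul_smul, mul_one]
  simp only [trace_smul, trace_add, trace_vecMulVec, smul_eq_mul]
  rw [dotProduct_comm, dotProduct_mulVec, ← mulVec_transpose, hW.eq]
  ring

end UnitDistGram

variable {n : ℕ} {W : Matrix (Fin n) (Fin n) ℝ}

lemma tWSet_eq_image (hW : W.IsSymm) :
    tWSet n W =
      (fun y => ((W *ᵥ 1) ⬝ᵥ y + W.trace) / 2) '' {y | (unitDistGram y).PosSemidef} := by
  ext r
  constructor
  · rintro ⟨X, hX, hc, rfl⟩
    obtain ⟨y, rfl⟩ : ∃ y, X = unitDistGram y := ⟨_, eq_unitDistGram_of_dist_eq_one X hc⟩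
    exact ⟨y, hX, (trace_mul_unitDistGram hW y).symm⟩
  · rintro ⟨y, hy, rfl⟩
    exact ⟨_, hy, fun _ _ => unitDistGram_dist_eq_one y, (trace_mul_unitDistGram hW y).symm⟩

lemma isLeast_tWSet (hW : W.IsSymm) (hS : 0 < (W *ᵥ 1) ⬝ᵥ 1) :
    IsLeast (tWSet n W) ((W.trace - (W *ᵥ 1) ⬝ᵥ (W *ᵥ 1) / ((W *ᵥ 1) ⬝ᵥ 1)) / 2) := by
  set w := W *ᵥ 1
  rw [tWSet_eq_image hW]
  constructor
  · have hy := posSemidef_unitDistGram_smul_one_sub_smul (w := w) (s := 2 / (w ⬝ᵥ 1))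
      (t := w ⬝ᵥ w / (w ⬝ᵥ 1) ^ 2) (by field_simp; linarith)
    refine ⟨_, hy, ?_⟩
    simp only [dotProduct_sub, dotProduct_smul, smul_eq_mul]
    field_simp
    ring
  · rintro _ ⟨y, hy, rfl⟩
    have h := (posSemidef_unitDistGram_iff y).1 hy w
    rw [dotProduct_comm 1 w, dotProduct_comm y w] at h
    have : -(w ⬝ᵥ y) ≤ w ⬝ᵥ w / (w ⬝ᵥ 1) := by
      rw [le_div_iff₀ hS]; linarith
    change _ ≤ (w ⬝ᵥ y + W.trace) / 2
    linarith

lemma tWSet_eq_singleton (hW : W.IsSymm) (hw : W *ᵥ 1 = 0) : tWSet n W = {W.trace / 2} := by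
  have h0 : (unitDistGram (0 : Fin n → ℝ)).PosSemidef :=
    (posSemidef_unitDistGram_iff 0).2 fun x => by simpa using dotProduct_self_star_nonneg x
  simpa [tWSet_eq_image hW, hw] using Set.Nonempty.image_const ⟨0, h0⟩ (W.trace / 2)

lemma not_bddBelow_tWSet (hW : W.IsSymm) (hS : (W *ᵥ 1) ⬝ᵥ 1 ≤ 0) (hw : W *ᵥ 1 ≠ 0) :
    ¬BddBelow (tWSet n W) := by
  set w := W *ᵥ 1
  have hA : 0 < w ⬝ᵥ w := lt_of_le_of_ne (by simpa using dotProduct_self_star_nonneg w)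
    (Ne.symm (dotProduct_self_eq_zero.not.mpr hw))
  rw [tWSet_eq_image hW]
  rintro ⟨c, hc⟩
  obtain ⟨s, hs⟩ : ∃ s, W.trace - s * (w ⬝ᵥ w) < 2 * c :=
    ⟨(W.trace - 2 * c + 1) / (w ⬝ᵥ w), by rw [div_mul_cancel₀ _ hA.ne']; linarith⟩
  have hy := posSemidef_unitDistGram_smul_one_sub_smul (w := w) (s := s)
    (t := s ^ 2 * (w ⬝ᵥ w) / 4) (by linarith)
  have := hc ⟨_, hy, rfl⟩
  simp only [dotProduct_sub, dotProduct_smul, smul_eq_mul] at this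
  nlinarith [mul_nonneg (sq_nonneg s) hA.le]

/-- The value of `t_W(Kₙ)`: if `𝟙ᵀW𝟙 > 0` then `2 t_W(Kₙ) = tr W − ‖W𝟙‖²/(𝟙ᵀW𝟙)`;
if `W𝟙 = 0` then `2 t_W(Kₙ) = tr W`; otherwise `t_W(Kₙ) = −∞` (the set is unbounded
below). -/
theorem tW_completeGraph (n : ℕ) (W : Matrix (Fin n) (Fin n) ℝ) (hW : W.IsSymm) :
    (0 < ∑ i, ∑ j, W i j →
      2 * sInf (tWSet n W)
        = W.trace - (∑ i, (∑ j, W i j) ^ 2) / (∑ i, ∑ j, W i j)) ∧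
    (W *ᵥ (fun _ => (1 : ℝ)) = 0 → 2 * sInf (tWSet n W) = W.trace) ∧
    (¬ (0 < ∑ i, ∑ j, W i j) → W *ᵥ (fun _ => (1 : ℝ)) ≠ 0 →
      ¬ BddBelow (tWSet n W)) := by
  have hS : ∑ i, ∑ j, W i j = (W *ᵥ 1) ⬝ᵥ 1 := by simp [mulVec, dotProduct]
  have hA : ∑ i, (∑ j, W i j) ^ 2 = (W *ᵥ 1) ⬝ᵥ (W *ᵥ 1) := by
    simp [mulVec, dotProduct, sq]
  rw [hS, hA]
  refine ⟨fun hpos => ?_, fun hw => ?_, fun hpos hw => not_bddBelow_tWSet hW (not_lt.1 hpos) hw⟩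
  · rw [(isLeast_tWSet hW hpos).csInf_eq]; ring
  · rw [tWSet_eq_singleton hW hw, csInf_singleton]; ring
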